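/- arXiv:1912.01773 — 5 statements merged into one kernel-verified Lean document; each statement's English description precedes it below -/
import Mathlib

section
/- For all real numbers x > 0 and θ ∈ [0, π/2], cosh(x) ≤ cosh(x·sin θ) · cosh(x·cos θ). -/
/-!
With `a = x sin θ` and `b = x cos θ` we have `a² + b² = x²`, and
`cosh a cosh b = (cosh (a + b) + cosh (a - b)) / 2` is the average of `t ↦ cosh √t` at
`(a + b)²` and `(a - b)²`, whose midpoint is `x²`. So the inequality is the convexity of
`t ↦ cosh √t` on `[0, ∞)`: its derivative `sinh u / (2u)`, `u = √t`, increases with `u` because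
`sinh u / u` is the slope of the convex function `sinh` from `0`.
-/

open Real Set

theorem convexOn_sinh_Ici : ConvexOn ℝ (Ici 0) sinh := by
  refine MonotoneOn.convexOn_of_deriv (convex_Ici 0) continuous_sinh.continuousOn
    (fun t _ ↦ differentiable_sinh.differentiableAt.differentiableWithinAt) ?_
  intro s hs t ht hst
  rw [interior_Ici] at hs ht
  rw [Real.deriv_sinh, cosh_le_cosh, abs_of_pos hs, abs_of_pos ht]
  exact hst

theorem monotoneOn_sinh_div_self : MonotoneOn (fun u ↦ sinh u / u) (Ioi 0) := by
  intro s hs t ht hst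
  simpa using convexOn_sinh_Ici.secant_mono self_mem_Ici (mem_Ici_of_Ioi hs) (mem_Ici_of_Ioi ht)
    hs.ne' ht.ne' hst

theorem hasDerivAt_cosh_sqrt {t : ℝ} (ht : 0 < t) :
    HasDerivAt (fun t ↦ cosh √t) (sinh √t / √t / 2) t :=
  ((hasDerivAt_cosh √t).comp t (hasDerivAt_sqrt ht.ne')).congr_deriv (by ring)

theorem convexOn_cosh_sqrt : ConvexOn ℝ (Ici 0) (fun t ↦ cosh √t) := by
  refine MonotoneOn.convexOn_of_deriv (convex_Ici 0) (by fun_prop) ?_ ?_ <;> rw [interior_Ici]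
  · exact fun t ht ↦ (hasDerivAt_cosh_sqrt ht).differentiableAt.differentiableWithinAt
  · intro s hs t ht hst
    rw [(hasDerivAt_cosh_sqrt hs).deriv, (hasDerivAt_cosh_sqrt ht).deriv]
    gcongr ?_ / _
    exact monotoneOn_sinh_div_self (sqrt_pos.2 hs) (sqrt_pos.2 ht) (sqrt_le_sqrt hst)

theorem cosh_sqrt_sq_add_sq_le (a b : ℝ) : cosh √(a ^ 2 + b ^ 2) ≤ cosh a * cosh b := by
  have hmid : (1 / 2 : ℝ) • (a + b) ^ 2 + (1 / 2 : ℝ) • (a - b) ^ 2 = a ^ 2 + b ^ 2 := by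
    simp only [smul_eq_mul]; ring
  calc cosh √(a ^ 2 + b ^ 2)
      ≤ (1 / 2 : ℝ) • cosh √((a + b) ^ 2) + (1 / 2 : ℝ) • cosh √((a - b) ^ 2) := by
        rw [← hmid]
        exact convexOn_cosh_sqrt.2 (sq_nonneg (a + b)) (sq_nonneg (a - b))
          (by norm_num) (by norm_num) (by norm_num)
    _ = cosh a * cosh b := by
        simp only [sqrt_sq_eq_abs, cosh_abs, smul_eq_mul, cosh_add, cosh_sub]; ring

theorem cosh_le_cosh_sin_mul_cosh_cos_general (x θ : ℝ) :
    Real.cosh x ≤ Real.cosh (x * Real.sin θ) * Real.cosh (x * Real.cos θ) := by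
  have h : (x * sin θ) ^ 2 + (x * cos θ) ^ 2 = x ^ 2 := by
    rw [mul_pow, mul_pow, ← mul_add, sin_sq_add_cos_sq, mul_one]
  simpa [h, sqrt_sq_eq_abs] using cosh_sqrt_sq_add_sq_le (x * sin θ) (x * cos θ)

theorem cosh_le_cosh_sin_mul_cosh_cos (x θ : ℝ) (hx : 0 < x)
    (hθ : θ ∈ Set.Icc 0 (Real.pi / 2)) :
    Real.cosh x ≤ Real.cosh (x * Real.sin θ) * Real.cosh (x * Real.cos θ) :=
  cosh_le_cosh_sin_mul_cosh_cos_general x θ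
end

section
/- For all real numbers x ≥ 0 and a, b ≥ 0 with a² + b² = 1, cosh(x) ≤ cosh(a·x) · cosh(b·x). -/
/-!
With `s = (a + b) x` and `d = (a - b) x` the product `cosh (a x) * cosh (b x)` is the mean of
`cosh s` and `cosh d`, while `a ^ 2 + b ^ 2 = 1` gives `s ^ 2 + d ^ 2 = 2 x ^ 2`. Since
`cosh x = ∑ (x ^ 2) ^ n / (2 n)!` is a series in `x ^ 2` with nonnegative coefficients, `cosh √t`
is convex in `t ≥ 0`, so `cosh x` is at most that mean.
-/

open Real

lemma two_mul_add_div_two_pow_le {p q : ℝ} (hp : 0 ≤ p) (hq : 0 ≤ q) (n : ℕ) :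
    2 * ((p + q) / 2) ^ n ≤ p ^ n + q ^ n := by
  have h := (convexOn_pow n).2 hp hq (by norm_num : (0 : ℝ) ≤ 1 / 2)
    (by norm_num : (0 : ℝ) ≤ 1 / 2) (by norm_num)
  simp only [smul_eq_mul] at h
  calc 2 * ((p + q) / 2) ^ n = 2 * (1 / 2 * p + 1 / 2 * q) ^ n := by ring_nf
    _ ≤ 2 * (1 / 2 * p ^ n + 1 / 2 * q ^ n) := by gcongr
    _ = p ^ n + q ^ n := by ring

lemma Real.two_mul_cosh_le_cosh_add_cosh {x s d : ℝ} (h : 2 * x ^ 2 ≤ s ^ 2 + d ^ 2) :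
    2 * cosh x ≤ cosh s + cosh d := by
  refine hasSum_le (fun n ↦ ?_) ((hasSum_cosh x).mul_left 2)
    ((hasSum_cosh s).add (hasSum_cosh d))
  rw [← add_div, mul_div_assoc']
  gcongr
  simp only [pow_mul]
  calc 2 * (x ^ 2) ^ n ≤ 2 * ((s ^ 2 + d ^ 2) / 2) ^ n := by gcongr; linarith
    _ ≤ (s ^ 2) ^ n + (d ^ 2) ^ n := two_mul_add_div_two_pow_le (sq_nonneg s) (sq_nonneg d) n

lemma Real.cosh_add_add_cosh_sub (u v : ℝ) :
    cosh (u + v) + cosh (u - v) = 2 * (cosh u * cosh v) := by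
  rw [cosh_add, cosh_sub]
  ring

theorem cosh_le_cosh_mul_cosh_of_sq_add_sq_general (x a b : ℝ) (hab : a ^ 2 + b ^ 2 = 1) :
    Real.cosh x ≤ Real.cosh (a * x) * Real.cosh (b * x) := by
  have hsq : 2 * x ^ 2 ≤ (a * x + b * x) ^ 2 + (a * x - b * x) ^ 2 := by
    linear_combination (-2 * x ^ 2) * hab
  have hmean := two_mul_cosh_le_cosh_add_cosh hsq
  rw [cosh_add_add_cosh_sub] at hmean
  linarith

theorem cosh_le_cosh_mul_cosh_of_sq_add_sq (x a b : ℝ) (hx : 0 ≤ x)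
    (ha : 0 ≤ a) (hb : 0 ≤ b) (hab : a ^ 2 + b ^ 2 = 1) :
    Real.cosh x ≤ Real.cosh (a * x) * Real.cosh (b * x) :=
  cosh_le_cosh_mul_cosh_of_sq_add_sq_general x a b hab
end

section
/- For all nonnegative real numbers u, v and natural number n, (u + v)^n ≤ ((√u + √v)^(2n) + (√u − √v)^(2n))/2. -/
theorem add_div_two_pow_le_pow_add_pow_div_two {𝕜 : Type*} [Field 𝕜] [LinearOrder 𝕜]
    [IsStrictOrderedRing 𝕜] {x y : 𝕜} (hx : 0 ≤ x) (hy : 0 ≤ y) (n : ℕ) :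
    ((x + y) / 2) ^ n ≤ (x ^ n + y ^ n) / 2 := by
  have hhalf : (0 : 𝕜) ≤ 1 / 2 := by positivity
  calc ((x + y) / 2) ^ n = (1 / 2 * x + 1 / 2 * y) ^ n := by ring
    _ ≤ 1 / 2 * x ^ n + 1 / 2 * y ^ n :=
      (convexOn_pow n).2 (Set.mem_Ici.2 hx) (Set.mem_Ici.2 hy) hhalf hhalf (add_halves 1)
    _ = (x ^ n + y ^ n) / 2 := by ring

theorem add_pow_le_half_add (u v : ℝ) (hu : 0 ≤ u) (hv : 0 ≤ v) (n : ℕ) :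
    (u + v) ^ n ≤
      ((Real.sqrt u + Real.sqrt v) ^ (2 * n) + (Real.sqrt u - Real.sqrt v) ^ (2 * n)) / 2 := by
  have hmean : u + v = ((√u + √v) ^ 2 + (√u - √v) ^ 2) / 2 := by
    linear_combination -Real.sq_sqrt hu - Real.sq_sqrt hv
  rw [hmean, pow_mul, pow_mul]
  exact add_div_two_pow_le_pow_add_pow_div_two (sq_nonneg _) (sq_nonneg _) n
end

section
/- Let λ ∈ (0,1), δ ∈ (0,1), and let L be a positive integer. Define L_cri = arcosh(1/δ)/arcosh(1/√(1−λ)), and define the success probability P_L = 1 − δ²·(T_L(T_{1/L}(1/δ)·√(1−λ)))², where T_a(x) = cosh(a·arcosh(x)) if x ≥ 1 and T_a(x) = cos(a·arccos(x)) if |x| ≤ 1 (for integer a these agree with the Chebyshev polynomial of the first kind). Then: if L ≤ L_cri, P_L ≥ 1 − δ²·(T_{√(1 − L²/L_cri²)}(1/δ))², and if L > L_cri, P_L ≥ 1 − δ². -/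
/-- Inverse hyperbolic cosine on `[1, ∞)`. -/
noncomputable def arcosh (x : ℝ) : ℝ := Real.log (x + Real.sqrt (x ^ 2 - 1))

lemma arcosh_nonneg {x : ℝ} (hx : 1 ≤ x) : 0 ≤ arcosh x := by
  unfold arcosh
  apply Real.log_nonneg
  nlinarith [Real.sqrt_nonneg (x ^ 2 - 1)]

lemma arcosh_pos {x : ℝ} (hx : 1 < x) : 0 < arcosh x := by
  unfold arcosh
  apply Real.log_pos
  nlinarith [Real.sqrt_nonneg (x ^ 2 - 1)]

lemma cosh_arcosh {x : ℝ} (hx : 1 ≤ x) : Real.cosh (arcosh x) = x := by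
  unfold arcosh
  have h1 : (0:ℝ) ≤ x ^ 2 - 1 := by nlinarith
  have hs := Real.sq_sqrt h1
  have hsn := Real.sqrt_nonneg (x ^ 2 - 1)
  have hy : 0 < x + Real.sqrt (x ^ 2 - 1) := by nlinarith
  rw [Real.cosh_eq, Real.exp_log hy, Real.exp_neg, Real.exp_log hy]
  field_simp
  nlinarith

lemma arcosh_cosh {t : ℝ} (ht : 0 ≤ t) : arcosh (Real.cosh t) = t := by
  unfold arcosh
  have h1 : Real.cosh t ^ 2 - 1 = Real.sinh t ^ 2 := by
    rw [Real.cosh_sq]; ring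
  rw [h1, Real.sqrt_sq (Real.sinh_nonneg_iff.2 ht), Real.cosh_add_sinh, Real.log_exp]

lemma arcosh_le_arcosh {x y : ℝ} (hx : 1 ≤ x) (hxy : x ≤ y) : arcosh x ≤ arcosh y := by
  unfold arcosh
  have hsn := Real.sqrt_nonneg (x ^ 2 - 1)
  apply Real.log_le_log (by nlinarith)
  have : Real.sqrt (x ^ 2 - 1) ≤ Real.sqrt (y ^ 2 - 1) :=
    Real.sqrt_le_sqrt (by nlinarith)
  linarith

lemma hasDerivAt_arcosh {x : ℝ} (hx : 1 < x) :
    HasDerivAt arcosh (1 / Real.sqrt (x ^ 2 - 1)) x := by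
  have hpos : (0:ℝ) < x ^ 2 - 1 := by nlinarith
  set s := Real.sqrt (x ^ 2 - 1) with hs_def
  have hs : 0 < s := Real.sqrt_pos.2 hpos
  have hs2 : s ^ 2 = x ^ 2 - 1 := Real.sq_sqrt hpos.le
  have h0 : HasDerivAt (fun y : ℝ => y ^ 2 - 1) (2 * x) x := by
    simpa using (hasDerivAt_pow 2 x).sub_const 1
  have h1 : HasDerivAt (fun y : ℝ => Real.sqrt (y ^ 2 - 1)) (1 / (2 * s) * (2 * x)) x := by
    have := (Real.hasDerivAt_sqrt hpos.ne').comp x h0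
    simpa [Function.comp_def] using this
  have h2 : HasDerivAt (fun y : ℝ => y + Real.sqrt (y ^ 2 - 1)) (1 + 1 / (2 * s) * (2 * x)) x :=
    (hasDerivAt_id x).add h1
  have hy : 0 < x + s := by nlinarith
  have h3 := h2.log hy.ne'
  have : (1 + 1 / (2 * s) * (2 * x)) / (x + s) = 1 / s := by
    rw [div_eq_div_iff (by positivity) hs.ne']
    field_simp
    ring
  rw [this] at h3
  exact h3

lemma sinh_le_mul_cosh {c : ℝ} (hc : 0 ≤ c) : Real.sinh c ≤ c * Real.cosh c := by
  have hderiv : ∀ y : ℝ, HasDerivAt (fun t => t * Real.cosh t - Real.sinh t)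
      (y * Real.sinh y) y := by
    intro y
    have h1 : HasDerivAt (fun t : ℝ => t * Real.cosh t)
        (1 * Real.cosh y + y * Real.sinh y) y :=
      (hasDerivAt_id y).mul (Real.hasDerivAt_cosh y)
    have := h1.sub (Real.hasDerivAt_sinh y)
    exact this.congr_deriv (by ring)
  have hmono : MonotoneOn (fun t => t * Real.cosh t - Real.sinh t) (Set.Ici 0) := by
    apply monotoneOn_of_hasDerivWithinAt_nonneg (convex_Ici 0)
      (fun y _ => (hderiv y).continuousAt.continuousWithinAt)
      (fun y _ => (hderiv y).hasDerivWithinAt)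
    intro y hy
    rw [interior_Ici, Set.mem_Ioi] at hy
    exact mul_nonneg hy.le (Real.sinh_nonneg_iff.2 hy.le)
  have h0 := hmono (Set.self_mem_Ici) (Set.mem_Ici.2 hc) hc
  simp at h0
  linarith

lemma cosh_sqrt_le {b c : ℝ} (hb : 0 ≤ b) (hc : 0 ≤ c) :
    Real.cosh (Real.sqrt (b ^ 2 + c ^ 2)) ≤ Real.cosh b * Real.cosh c := by
  rcases eq_or_lt_of_le hc with hc0 | hc0
  · rw [← hc0]
    simp [Real.sqrt_sq hb]
  -- c > 0 fixed; define F
  have hXgt : ∀ y : ℝ, 1 < Real.cosh y * Real.cosh c := by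
    intro y
    nlinarith [Real.one_le_cosh y, Real.one_lt_cosh.2 hc0.ne']
  have hderiv : ∀ y : ℝ, HasDerivAt
      (fun t => arcosh (Real.cosh t * Real.cosh c) - Real.sqrt (t ^ 2 + c ^ 2))
      (Real.sinh y * Real.cosh c / Real.sqrt ((Real.cosh y * Real.cosh c) ^ 2 - 1)
        - y / Real.sqrt (y ^ 2 + c ^ 2)) y := by
    intro y
    have hg : HasDerivAt (fun t : ℝ => Real.cosh t * Real.cosh c)
        (Real.sinh y * Real.cosh c) y := (Real.hasDerivAt_cosh y).mul_const _
    have h1 : HasDerivAt (fun t : ℝ => arcosh (Real.cosh t * Real.cosh c))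
        (1 / Real.sqrt ((Real.cosh y * Real.cosh c) ^ 2 - 1) * (Real.sinh y * Real.cosh c)) y := by
      have := (hasDerivAt_arcosh (hXgt y)).comp y hg
      simpa [Function.comp_def] using this
    have hq : (0:ℝ) < y ^ 2 + c ^ 2 := by positivity
    have h0 : HasDerivAt (fun t : ℝ => t ^ 2 + c ^ 2) (2 * y) y := by
      simpa using (hasDerivAt_pow 2 y).add_const (c ^ 2)
    have h2 : HasDerivAt (fun t : ℝ => Real.sqrt (t ^ 2 + c ^ 2))
        (1 / (2 * Real.sqrt (y ^ 2 + c ^ 2)) * (2 * y)) y := by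
      have := (Real.hasDerivAt_sqrt hq.ne').comp y h0
      simpa [Function.comp_def] using this
    have := h1.sub h2
    refine this.congr_deriv ?_
    have hsq : 0 < Real.sqrt (y ^ 2 + c ^ 2) := Real.sqrt_pos.2 hq
    field_simp
  have hnn : ∀ y : ℝ, 0 < y →
      0 ≤ Real.sinh y * Real.cosh c / Real.sqrt ((Real.cosh y * Real.cosh c) ^ 2 - 1)
        - y / Real.sqrt (y ^ 2 + c ^ 2) := by
    intro y hy
    set X := Real.cosh y * Real.cosh c with hX
    have hD : X ^ 2 - 1 = Real.sinh y ^ 2 * Real.cosh c ^ 2 + Real.sinh c ^ 2 := by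
      rw [hX]
      nlinarith [Real.cosh_sq y, Real.cosh_sq c]
    have hDpos : 0 < X ^ 2 - 1 := by nlinarith [hXgt y, Real.one_le_cosh y]
    have hqpos : (0:ℝ) < y ^ 2 + c ^ 2 := by positivity
    have hs1 : 0 < Real.sqrt (X ^ 2 - 1) := Real.sqrt_pos.2 hDpos
    have hs2 : 0 < Real.sqrt (y ^ 2 + c ^ 2) := Real.sqrt_pos.2 hqpos
    rw [sub_nonneg, div_le_div_iff₀ hs2 hs1]
    have hsinhy : 0 < Real.sinh y := Real.sinh_pos_iff.2 hy
    have hcoshc : (1:ℝ) ≤ Real.cosh c := Real.one_le_cosh c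
    -- rewrite both sides as sqrt of products
    have lhs_eq : y * Real.sqrt (X ^ 2 - 1) = Real.sqrt (y ^ 2 * (X ^ 2 - 1)) := by
      rw [Real.sqrt_mul (sq_nonneg y), Real.sqrt_sq hy.le]
    have rhs_eq : Real.sinh y * Real.cosh c * Real.sqrt (y ^ 2 + c ^ 2)
        = Real.sqrt ((Real.sinh y * Real.cosh c) ^ 2 * (y ^ 2 + c ^ 2)) := by
      rw [Real.sqrt_mul (sq_nonneg _), Real.sqrt_sq (by positivity)]
    rw [lhs_eq, rhs_eq]
    apply Real.sqrt_le_sqrt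
    have h1 : y ≤ Real.sinh y := (Real.self_le_sinh_iff).2 hy.le
    have h2 : Real.sinh c ≤ c * Real.cosh c := sinh_le_mul_cosh hc
    have h3 : y * Real.sinh c ≤ Real.sinh y * (c * Real.cosh c) := by
      have hsc : 0 ≤ Real.sinh c := Real.sinh_nonneg_iff.2 hc
      nlinarith
    have h4 : (y * Real.sinh c) ^ 2 ≤ (Real.sinh y * (c * Real.cosh c)) ^ 2 := by
      have : 0 ≤ y * Real.sinh c := mul_nonneg hy.le (Real.sinh_nonneg_iff.2 hc)
      nlinarith
    rw [hD]
    nlinarith [h4]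
  have hmono : MonotoneOn
      (fun t => arcosh (Real.cosh t * Real.cosh c) - Real.sqrt (t ^ 2 + c ^ 2))
      (Set.Ici 0) := by
    apply monotoneOn_of_hasDerivWithinAt_nonneg (convex_Ici 0)
      (fun y _ => (hderiv y).continuousAt.continuousWithinAt)
      (fun y _ => (hderiv y).hasDerivWithinAt)
    intro y hy
    rw [interior_Ici, Set.mem_Ioi] at hy
    exact hnn y hy
  have h0 := hmono (Set.self_mem_Ici) (Set.mem_Ici.2 hb) hb
  simp only [Real.cosh_zero, one_mul] at h0
  rw [arcosh_cosh hc, zero_pow (by norm_num), zero_add, Real.sqrt_sq hc] at h0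
  have hkey : Real.sqrt (b ^ 2 + c ^ 2) ≤ arcosh (Real.cosh b * Real.cosh c) := by linarith
  have habs : |Real.sqrt (b ^ 2 + c ^ 2)| ≤ |arcosh (Real.cosh b * Real.cosh c)| := by
    rw [abs_of_nonneg (Real.sqrt_nonneg _), abs_of_nonneg (arcosh_nonneg (hXgt b).le)]
    exact hkey
  have hfin := Real.cosh_le_cosh.2 habs
  rwa [cosh_arcosh (hXgt b).le] at hfin


/-- Extended Chebyshev function of the first kind with real index `a`:
`cosh (a * arcosh x)` for `x ≥ 1`, and `cos (a * arccos x)` for `|x| ≤ 1`. -/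
noncomputable def T (a x : ℝ) : ℝ :=
  if 1 ≤ x then Real.cosh (a * arcosh x) else Real.cos (a * Real.arccos x)

theorem success_probability_lower_bound (lam δ : ℝ) (L : ℕ)
    (hlam : lam ∈ Set.Ioo (0:ℝ) 1) (hδ : δ ∈ Set.Ioo (0:ℝ) 1) (hL : 0 < L) :
    let Lcri : ℝ := arcosh (1 / δ) / arcosh (1 / Real.sqrt (1 - lam))
    let P : ℝ := 1 - δ ^ 2 * (T L (T (1 / L) (1 / δ) * Real.sqrt (1 - lam))) ^ 2
    ((L : ℝ) ≤ Lcri → 1 - δ ^ 2 * (T (Real.sqrt (1 - (L : ℝ) ^ 2 / Lcri ^ 2)) (1 / δ)) ^ 2 ≤ P) ∧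
    (Lcri < (L : ℝ) → 1 - δ ^ 2 ≤ P) := by
  obtain ⟨hlam0, hlam1⟩ := hlam
  obtain ⟨hδ0, hδ1⟩ := hδ
  intro Lcri P
  have hs0 : 0 < Real.sqrt (1 - lam) := Real.sqrt_pos.2 (by linarith)
  have hs1 : Real.sqrt (1 - lam) < 1 := by
    have h := Real.sqrt_lt_sqrt (by linarith : (0:ℝ) ≤ 1 - lam) (by linarith : 1 - lam < 1)
    rwa [Real.sqrt_one] at h
  set s := Real.sqrt (1 - lam) with hs_def
  have hδinv : 1 < 1 / δ := by rw [lt_div_iff₀ hδ0]; linarith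
  have hsinv : 1 < 1 / s := by rw [lt_div_iff₀ hs0]; linarith
  set A := arcosh (1 / δ) with hA_def
  set B := arcosh (1 / s) with hB_def
  have hA : 0 < A := arcosh_pos hδinv
  have hB : 0 < B := arcosh_pos hsinv
  have hcoshB : Real.cosh B = 1 / s := cosh_arcosh hsinv.le
  have hLpos : (0:ℝ) < (L : ℝ) := Nat.cast_pos.2 hL
  have hT1 : T (1 / (L:ℝ)) (1 / δ) = Real.cosh (A / (L:ℝ)) := by
    unfold T
    rw [if_pos hδinv.le, ← hA_def, one_div_mul_eq_div]
  have hLcri : Lcri = A / B := rfl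
  constructor
  · -- case L ≤ Lcri
    intro h
    rw [hLcri] at h
    have hBa : B ≤ A / (L:ℝ) := by
      rw [le_div_iff₀ hLpos]
      rw [le_div_iff₀ hB] at h
      nlinarith
    set a := A / (L:ℝ) with ha_def
    have ha : 0 < a := div_pos hA hLpos
    have hcoshBa : Real.cosh B ≤ Real.cosh a := by
      apply Real.cosh_le_cosh.2
      rw [abs_of_nonneg hB.le, abs_of_nonneg ha.le]
      exact hBa
    have hx1 : 1 ≤ Real.cosh a * s := by
      rw [hcoshB] at hcoshBa
      have := mul_le_mul_of_nonneg_right hcoshBa hs0.le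
      rwa [one_div, inv_mul_cancel₀ hs0.ne'] at this
    have hTL : T L (T (1 / (L:ℝ)) (1 / δ) * s)
        = Real.cosh ((L:ℝ) * arcosh (Real.cosh a * s)) := by
      rw [hT1]
      unfold T
      rw [if_pos hx1]
    -- key inequality
    have hab2 : (0:ℝ) ≤ a ^ 2 - B ^ 2 := by nlinarith
    set c := Real.sqrt (a ^ 2 - B ^ 2) with hc_def
    have hc : 0 ≤ c := Real.sqrt_nonneg _
    have hc2 : c ^ 2 = a ^ 2 - B ^ 2 := Real.sq_sqrt hab2
    have hkey := cosh_sqrt_le hB.le hc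
    have hBc : B ^ 2 + c ^ 2 = a ^ 2 := by rw [hc2]; ring
    rw [hBc, Real.sqrt_sq ha.le] at hkey
    have hsB : s * Real.cosh B = 1 := by
      rw [hcoshB]; field_simp
    have hxlec : Real.cosh a * s ≤ Real.cosh c := by
      have h1 := mul_le_mul_of_nonneg_left hkey hs0.le
      have h2 : s * (Real.cosh B * Real.cosh c) = Real.cosh c := by
        rw [← mul_assoc, hsB, one_mul]
      nlinarith
    have harc : arcosh (Real.cosh a * s) ≤ c := by
      calc arcosh (Real.cosh a * s) ≤ arcosh (Real.cosh c) := arcosh_le_arcosh hx1 hxlec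
        _ = c := arcosh_cosh hc
    have harcnn : 0 ≤ arcosh (Real.cosh a * s) := arcosh_nonneg hx1
    have hLarc : (L:ℝ) * arcosh (Real.cosh a * s) ≤ (L:ℝ) * c :=
      mul_le_mul_of_nonneg_left harc hLpos.le
    -- RHS
    have hγsq : (0:ℝ) ≤ 1 - (L:ℝ) ^ 2 / Lcri ^ 2 := by
      rw [hLcri]
      rw [le_div_iff₀ hB] at h
      have hle : (L:ℝ)^2 / (A/B)^2 ≤ 1 := by
        rw [div_le_one (by positivity), div_pow, le_div_iff₀ (by positivity)]
        calc (L:ℝ)^2 * B^2 = ((L:ℝ)*B)^2 := by ring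
          _ ≤ A^2 := pow_le_pow_left₀ (by positivity) h 2
      linarith
    have hTγ : T (Real.sqrt (1 - (L:ℝ) ^ 2 / Lcri ^ 2)) (1 / δ)
        = Real.cosh (Real.sqrt (1 - (L:ℝ) ^ 2 / Lcri ^ 2) * A) := by
      unfold T
      rw [if_pos hδinv.le]
    have hγA : Real.sqrt (1 - (L:ℝ) ^ 2 / Lcri ^ 2) * A = (L:ℝ) * c := by
      have h1 : Real.sqrt (1 - (L:ℝ) ^ 2 / Lcri ^ 2) * A
          = Real.sqrt ((1 - (L:ℝ) ^ 2 / Lcri ^ 2) * A ^ 2) := by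
        rw [Real.sqrt_mul hγsq, Real.sqrt_sq hA.le]
      have h2 : (L:ℝ) * c = Real.sqrt ((L:ℝ) ^ 2 * (a ^ 2 - B ^ 2)) := by
        rw [Real.sqrt_mul (sq_nonneg _), Real.sqrt_sq hLpos.le, ← hc_def]
      rw [h1, h2]
      congr 1
      rw [hLcri, ha_def]
      field_simp
    show 1 - δ ^ 2 * (T (Real.sqrt (1 - (L:ℝ) ^ 2 / Lcri ^ 2)) (1 / δ)) ^ 2
        ≤ 1 - δ ^ 2 * (T L (T (1 / (L:ℝ)) (1 / δ) * s)) ^ 2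
    rw [hTγ, hγA, hTL]
    have hcc : Real.cosh ((L:ℝ) * arcosh (Real.cosh a * s)) ≤ Real.cosh ((L:ℝ) * c) := by
      apply Real.cosh_le_cosh.2
      rw [abs_of_nonneg (by positivity), abs_of_nonneg (by positivity)]
      exact hLarc
    have hnn1 : 0 ≤ Real.cosh ((L:ℝ) * arcosh (Real.cosh a * s)) :=
      (Real.cosh_pos _).le
    have hsq := pow_le_pow_left₀ hnn1 hcc 2
    have hm := mul_le_mul_of_nonneg_left hsq (sq_nonneg δ)
    linarith
  · -- case Lcri < L
    intro h
    rw [hLcri] at h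
    have haB : A / (L:ℝ) < B := by
      rw [div_lt_iff₀ hLpos]
      rw [div_lt_iff₀ hB] at h
      nlinarith
    have hcosh : Real.cosh (A / (L:ℝ)) < Real.cosh B := by
      apply Real.cosh_lt_cosh.2
      rw [abs_of_nonneg (by positivity), abs_of_nonneg hB.le]
      exact haB
    have hxlt : Real.cosh (A / (L:ℝ)) * s < 1 := by
      rw [hcoshB] at hcosh
      have := mul_lt_mul_of_pos_right hcosh hs0
      rwa [one_div, inv_mul_cancel₀ hs0.ne'] at this
    have hTL : T L (T (1 / (L:ℝ)) (1 / δ) * s)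
        = Real.cos ((L:ℝ) * Real.arccos (Real.cosh (A / (L:ℝ)) * s)) := by
      rw [hT1]
      unfold T
      rw [if_neg (not_le.2 hxlt)]
    show (1:ℝ) - δ ^ 2 ≤ 1 - δ ^ 2 * (T L (T (1 / (L:ℝ)) (1 / δ) * s)) ^ 2
    rw [hTL]
    have h1 := Real.neg_one_le_cos ((L:ℝ) * Real.arccos (Real.cosh (A / (L:ℝ)) * s))
    have h2 := Real.cos_le_one ((L:ℝ) * Real.arccos (Real.cosh (A / (L:ℝ)) * s))
    have hcos2 : Real.cos ((L:ℝ) * Real.arccos (Real.cosh (A / (L:ℝ)) * s)) ^ 2 ≤ 1 :=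
      Real.cos_sq_le_one _
    have hm := mul_le_mul_of_nonneg_left hcos2 (sq_nonneg δ)
    rw [mul_one] at hm
    linarith
end

section
/- Let λ ∈ (0,1) and δ ∈ (0,1), and define T_{1/L}(1/δ) = cosh(arcosh(1/δ)/L) for a positive real L. If L ≥ ln(2/δ)/√λ, then T_{1/L}(1/δ)·√(1−λ) ≤ 1. -/
theorem arcosh_eq_real_arcosh : arcosh = Real.arcosh := rfl

namespace Real

theorem arcosh_le_log_two_mul {x : ℝ} (hx : 0 < x) : arcosh x ≤ log (2 * x) := by
  have hsqrt : √(x ^ 2 - 1) ≤ x := by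
    calc √(x ^ 2 - 1) ≤ √(x ^ 2) := sqrt_le_sqrt (by linarith)
      _ = x := sqrt_sq hx.le
  exact log_le_log (by positivity) (by linarith)

theorem sqrt_one_sub_le_exp_neg_half (x : ℝ) : √(1 - x) ≤ exp (-x / 2) := by
  rw [exp_half]
  exact sqrt_le_sqrt (by linarith [add_one_le_exp (-x)])

theorem cosh_mul_sqrt_one_sub_le_one {t x : ℝ} (h : t ^ 2 ≤ x) : cosh t * √(1 - x) ≤ 1 :=
  calc cosh t * √(1 - x) ≤ exp (x / 2) * exp (-x / 2) := by
        gcongr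
        · exact (cosh_le_exp_half_sq t).trans (exp_le_exp.2 (by linarith))
        · exact sqrt_one_sub_le_exp_neg_half x
    _ = 1 := by rw [← exp_add, neg_div, add_neg_cancel, exp_zero]

end Real

theorem chebyshev_arg_le_one (lam δ L : ℝ)
    (hlam : lam ∈ Set.Ioo (0:ℝ) 1) (hδ : δ ∈ Set.Ioo (0:ℝ) 1)
    (hL : Real.log (2 / δ) / Real.sqrt lam ≤ L) :
    Real.cosh (arcosh (1 / δ) / L) * Real.sqrt (1 - lam) ≤ 1 := by
  obtain ⟨hlam0, -⟩ := hlam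
  obtain ⟨hδ0, hδ1⟩ := hδ
  rw [arcosh_eq_real_arcosh]
  have hsqrt : 0 < √lam := Real.sqrt_pos.2 hlam0
  have hlog : 0 < Real.log (2 / δ) := Real.log_pos (by rw [lt_div_iff₀ hδ0]; linarith)
  have hL0 : 0 < L := (div_pos hlog hsqrt).trans_le hL
  have harcosh : Real.arcosh (1 / δ) ≤ Real.log (2 / δ) := by
    simpa only [mul_one_div] using Real.arcosh_le_log_two_mul (one_div_pos.2 hδ0)
  have ht0 : 0 ≤ Real.arcosh (1 / δ) / L :=
    div_nonneg (Real.arcosh_nonneg (by rw [le_div_iff₀ hδ0]; linarith)) hL0.le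
  have ht : Real.arcosh (1 / δ) / L ≤ √lam := by
    rw [div_le_iff₀ hL0]
    rw [div_le_iff₀ hsqrt] at hL
    linarith
  exact Real.cosh_mul_sqrt_one_sub_le_one ((Real.le_sqrt ht0 hlam0.le).1 ht)
end
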